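/- Let (λ, v) with v = (x; y; z) ∈ ℂ^{n+m+l} be an eigenpair of G_{α,β} = I − P⁻¹𝓑 with λ ≠ 0 and λ ≠ 1 and ‖y‖₂ = 1. If yᴴCᵀ(αI + βCCᵀ)⁻¹Cy + 2 yᴴBA⁻¹Bᵀy < 4 yᴴ(αI + βBBᵀ)y, then |λ| < 1. -/

import Mathlib

open Matrix

/-- The double saddle point matrix 𝓑 = [[A, Bᵀ, 0], [−B, 0, −Cᵀ], [0, C, 0]]. -/
def calB {n m l : ℕ} (A : Matrix (Fin n) (Fin n) ℝ) (B : Matrix (Fin m) (Fin n) ℝ)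
    (C : Matrix (Fin l) (Fin m) ℝ) :
    Matrix ((Fin n ⊕ Fin m) ⊕ Fin l) ((Fin n ⊕ Fin m) ⊕ Fin l) ℝ :=
  fromBlocks (fromBlocks A Bᵀ (-B) 0) (fromRows 0 (-Cᵀ)) (fromCols 0 C) 0

/-- The block upper triangular preconditioner
`P = [[A, Bᵀ, 0], [0, αI + βBBᵀ, −Cᵀ], [0, 0, αI + βCCᵀ]]`. -/
def precondP {n m l : ℕ} (α β : ℝ) (A : Matrix (Fin n) (Fin n) ℝ)
    (B : Matrix (Fin m) (Fin n) ℝ) (C : Matrix (Fin l) (Fin m) ℝ) :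
    Matrix ((Fin n ⊕ Fin m) ⊕ Fin l) ((Fin n ⊕ Fin m) ⊕ Fin l) ℝ :=
  fromBlocks
    (fromBlocks A Bᵀ 0 (α • (1 : Matrix (Fin m) (Fin m) ℝ) + β • (B * Bᵀ)))
    (fromRows 0 (-Cᵀ)) 0 (α • (1 : Matrix (Fin l) (Fin l) ℝ) + β • (C * Cᵀ))

/-- The iteration matrix `G_{α,β} = I − P⁻¹ 𝓑`. -/
noncomputable def iterG {n m l : ℕ} (α β : ℝ) (A : Matrix (Fin n) (Fin n) ℝ)
    (B : Matrix (Fin m) (Fin n) ℝ) (C : Matrix (Fin l) (Fin m) ℝ) :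
    Matrix ((Fin n ⊕ Fin m) ⊕ Fin l) ((Fin n ⊕ Fin m) ⊕ Fin l) ℝ :=
  1 - (precondP α β A B C)⁻¹ * calB A B C


/-!
Put `μ = 1 - λ`, so that the eigen-equation reads `𝓑 v = μ P v`. Its first block row forces
`A x = -Bᵀ y` (as `λ ≠ 0`), its third gives `μ z = (αI + βCCᵀ)⁻¹ C y`, and pairing the second
with `y` leaves the scalar quadratic `s μ² - (p + q) μ + q = 0`, where `s = yᴴ(αI + βBBᵀ)y > 0`,
`p = yᴴBA⁻¹Bᵀy > 0` and `q = yᴴCᵀ(αI + βCCᵀ)⁻¹Cy ≥ 0`. A non-real root has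
`|1 - μ|² = 1 - p / s < 1`, and `q + 2p < 4s` confines a real root to `(0, 2)`.
-/

open ComplexOrder

namespace Matrix

variable {ι : Type*} [Fintype ι]

theorem map_ofReal_mul {l m n : Type*} [Fintype m] (M : Matrix l m ℝ) (N : Matrix m n ℝ) :
    (M * N).map Complex.ofReal = M.map Complex.ofReal * N.map Complex.ofReal :=
  Matrix.map_mul (f := Complex.ofRealHom)

theorem map_ofReal_nonsing_inv_mul [DecidableEq ι] {M : Matrix ι ι ℝ} (hM : IsUnit M.det) :
    M⁻¹.map Complex.ofReal * M.map Complex.ofReal = 1 := by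
  rw [← map_ofReal_mul, nonsing_inv_mul _ hM,
    Matrix.map_one _ Complex.ofReal_zero Complex.ofReal_one]

theorem map_ofReal_mulVec_eq_of_mulVec_one_sub_inv_mul [DecidableEq ι]
    {P K : Matrix ι ι ℝ} (hP : IsUnit P.det) {v : ι → ℂ} {lam : ℂ}
    (h : (1 - P⁻¹ * K).map Complex.ofReal *ᵥ v = lam • v) :
    K.map Complex.ofReal *ᵥ v = (1 - lam) • (P.map Complex.ofReal *ᵥ v) := by
  have hPK : P.map Complex.ofReal * (1 - P⁻¹ * K).map Complex.ofReal =
      P.map Complex.ofReal - K.map Complex.ofReal := by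
    rw [← map_ofReal_mul, mul_sub, mul_one, ← Matrix.mul_assoc,
      mul_nonsing_inv _ hP, Matrix.one_mul, Matrix.map_sub _ Complex.ofReal_sub]
  have := congrArg (P.map Complex.ofReal *ᵥ ·) h
  simp only [mulVec_mulVec, hPK, sub_mulVec, mulVec_smul] at this
  rw [sub_smul, one_smul, ← this, sub_sub_cancel]

theorem star_dotProduct_map_ofReal_mulVec {M : Matrix ι ι ℝ} (hM : M.IsSymm) (u : ι → ℂ) :
    star u ⬝ᵥ M.map Complex.ofReal *ᵥ u =
      ((fun i ↦ (u i).re) ⬝ᵥ M *ᵥ (fun i ↦ (u i).re) +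
        (fun i ↦ (u i).im) ⬝ᵥ M *ᵥ (fun i ↦ (u i).im) : ℝ) := by
  have hself :
      star (star u ⬝ᵥ M.map Complex.ofReal *ᵥ u) = star u ⬝ᵥ M.map Complex.ofReal *ᵥ u := by
    rw [← star_dotProduct, star_mulVec, ← conjTranspose_map _ (fun _ ↦ by simp),
      conjTranspose_eq_transpose_of_trivial, hM.eq, dotProduct_mulVec]
  refine Complex.ext ?_ (by simpa using Complex.conj_eq_iff_im.mp hself)
  simp only [dotProduct, mulVec, Matrix.map_apply, Pi.star_apply, Finset.mul_sum,
    Complex.re_sum, Complex.mul_re, Complex.mul_im, Complex.ofReal_re, Complex.ofReal_im,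
    RCLike.star_def, Complex.conj_re, Complex.conj_im, ← Finset.sum_add_distrib]
  refine Finset.sum_congr rfl fun i _ ↦ Finset.sum_congr rfl fun j _ ↦ ?_
  ring

theorem PosSemidef.map_ofReal {M : Matrix ι ι ℝ} (hM : M.PosSemidef) :
    (M.map Complex.ofReal).PosSemidef := by
  refine .of_dotProduct_mulVec_nonneg (hM.isHermitian.map _ fun _ ↦ by simp)
    fun u ↦ ?_
  rw [star_dotProduct_map_ofReal_mulVec (isHermitian_iff_isSymm.mp hM.isHermitian)]
  exact_mod_cast add_nonneg (by simpa using hM.dotProduct_mulVec_nonneg _)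
    (by simpa using hM.dotProduct_mulVec_nonneg _)

theorem PosDef.map_ofReal {M : Matrix ι ι ℝ} (hM : M.PosDef) :
    (M.map Complex.ofReal).PosDef := by
  refine .of_dotProduct_mulVec_pos (hM.isHermitian.map _ fun _ ↦ by simp)
    fun u hu ↦ ?_
  rw [star_dotProduct_map_ofReal_mulVec (isHermitian_iff_isSymm.mp hM.isHermitian)]
  have hnonneg (w : ι → ℝ) : 0 ≤ w ⬝ᵥ M *ᵥ w := by
    simpa using hM.posSemidef.dotProduct_mulVec_nonneg w
  have hpos {w : ι → ℝ} (hw : w ≠ 0) : 0 < w ⬝ᵥ M *ᵥ w := by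
    simpa using hM.dotProduct_mulVec_pos hw
  have hparts : (fun i ↦ (u i).re) ≠ 0 ∨ (fun i ↦ (u i).im) ≠ 0 := by
    by_contra! h
    exact hu (funext fun i ↦ Complex.ext (congrFun h.1 i) (congrFun h.2 i))
  norm_cast
  rcases hparts with h | h
  · exact add_pos_of_pos_of_nonneg (hpos h) (hnonneg _)
  · exact add_pos_of_nonneg_of_pos (hnonneg _) (hpos h)

theorem posDef_smul_one_add_smul_mul_transpose {m n : Type*} [Fintype m] [DecidableEq m]
    [Fintype n] {α β : ℝ} (hα : 0 < α) (hβ : 0 ≤ β) (M : Matrix m n ℝ) :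
    (α • (1 : Matrix m m ℝ) + β • (M * Mᵀ)).PosDef :=
  (PosDef.one.smul hα).add_posSemidef <| (posSemidef_self_mul_conjTranspose M).smul hβ

theorem vecMul_injective_of_rank_eq_card {K m n : Type*} [Field K] [Fintype m] [Fintype n]
    {B : Matrix m n K} (hB : B.rank = Fintype.card m) : Function.Injective B.vecMul := by
  classical
  have hker := LinearMap.finrank_range_add_finrank_ker Bᵀ.mulVecLin
  rw [← rank, rank_transpose, hB, Module.finrank_fintype_fun_eq_card, add_eq_left,
    Submodule.finrank_eq_zero, LinearMap.ker_eq_bot] at hker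
  exact fun a b h ↦ hker (by simpa [mulVec_transpose] using h)

theorem quadratic_of_block_equations {K n m l : Type*} [Field K] [Fintype n] [Fintype m]
    [Fintype l] [DecidableEq n] [DecidableEq l] {A Ai : Matrix n n K} {B : Matrix m n K}
    {Bt : Matrix n m K} {C : Matrix l m K} {Ct : Matrix m l K} {S : Matrix m m K}
    {T Ti : Matrix l l K} (hA : Ai * A = 1) (hT : Ti * T = 1) {x : n → K} {y : m → K}
    {z : l → K} {μ : K} (hμ : μ ≠ 1)
    (h₁ : A *ᵥ x + Bt *ᵥ y = μ • (A *ᵥ x + Bt *ᵥ y))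
    (h₂ : -(B *ᵥ x) - Ct *ᵥ z = μ • (S *ᵥ y - Ct *ᵥ z))
    (h₃ : C *ᵥ y = μ • (T *ᵥ z)) (w : m → K) :
    (w ⬝ᵥ S *ᵥ y) * μ ^ 2 - (w ⬝ᵥ (B * Ai * Bt) *ᵥ y + w ⬝ᵥ (Ct * Ti * C) *ᵥ y) * μ +
      w ⬝ᵥ (Ct * Ti * C) *ᵥ y = 0 := by
  have hx : x = -(Ai *ᵥ Bt *ᵥ y) := by
    have : (1 - μ) • (A *ᵥ x + Bt *ᵥ y) = 0 := by rw [sub_smul, one_smul, ← h₁, sub_self]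
    have hAx : A *ᵥ x = -(Bt *ᵥ y) :=
      eq_neg_of_add_eq_zero_left ((smul_eq_zero.mp this).resolve_left (sub_ne_zero.mpr hμ.symm))
    calc x = Ai *ᵥ A *ᵥ x := by rw [mulVec_mulVec, hA, one_mulVec]
      _ = -(Ai *ᵥ Bt *ᵥ y) := by rw [hAx, mulVec_neg]
  have hz : μ • z = Ti *ᵥ C *ᵥ y := by
    rw [h₃, mulVec_smul, mulVec_mulVec, hT, one_mulVec]
  have hq : μ * (w ⬝ᵥ Ct *ᵥ z) = w ⬝ᵥ (Ct * Ti * C) *ᵥ y := by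
    rw [← smul_eq_mul, ← dotProduct_smul, ← mulVec_smul, hz, mulVec_mulVec, mulVec_mulVec]
  have hdot := congrArg (w ⬝ᵥ ·) h₂
  simp only [hx, mulVec_neg, neg_neg, dotProduct_sub, dotProduct_smul, smul_eq_mul,
    mulVec_mulVec, ← Matrix.mul_assoc] at hdot
  linear_combination (-μ) * hdot + (μ - 1) * hq

end Matrix

theorem isUnit_det_precondP {n m l : ℕ} {α β : ℝ} {A : Matrix (Fin n) (Fin n) ℝ}
    (hA : A.PosDef) (hα : 0 < α) (hβ : 0 ≤ β) (B : Matrix (Fin m) (Fin n) ℝ)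
    (C : Matrix (Fin l) (Fin m) ℝ) : IsUnit (precondP α β A B C).det := by
  rw [precondP, det_fromBlocks_zero₂₁, det_fromBlocks_zero₂₁]
  exact (mul_pos (mul_pos hA.det_pos
    (posDef_smul_one_add_smul_mul_transpose hα hβ B).det_pos)
    (posDef_smul_one_add_smul_mul_transpose hα hβ C).det_pos).ne'.isUnit

theorem block_equations_of_calB_mulVec_eq_smul_precondP_mulVec {n m l : ℕ} {α β : ℝ}
    {A : Matrix (Fin n) (Fin n) ℝ} {B : Matrix (Fin m) (Fin n) ℝ} {C : Matrix (Fin l) (Fin m) ℝ}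
    {x : Fin n → ℂ} {y : Fin m → ℂ} {z : Fin l → ℂ} {μ : ℂ}
    (h : (calB A B C).map Complex.ofReal *ᵥ Sum.elim (Sum.elim x y) z =
      μ • ((precondP α β A B C).map Complex.ofReal *ᵥ Sum.elim (Sum.elim x y) z)) :
    A.map Complex.ofReal *ᵥ x + Bᵀ.map Complex.ofReal *ᵥ y =
        μ • (A.map Complex.ofReal *ᵥ x + Bᵀ.map Complex.ofReal *ᵥ y) ∧
      -(B.map Complex.ofReal *ᵥ x) - Cᵀ.map Complex.ofReal *ᵥ z =
        μ • ((α • (1 : Matrix (Fin m) (Fin m) ℝ) + β • (B * Bᵀ)).map Complex.ofReal *ᵥ y -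
          Cᵀ.map Complex.ofReal *ᵥ z) ∧
      C.map Complex.ofReal *ᵥ y =
        μ • ((α • (1 : Matrix (Fin l) (Fin l) ℝ) + β • (C * Cᵀ)).map Complex.ofReal *ᵥ z) := by
  simp only [calB, precondP, fromBlocks_map, fromRows_map, fromCols_map, fromBlocks_mulVec,
    fromRows_mulVec, Matrix.map_zero _ Complex.ofReal_zero, Matrix.map_neg _ Complex.ofReal_neg,
    zero_mulVec, neg_mulVec, Sum.elim_comp_inl, Sum.elim_comp_inr, funext_iff, Sum.forall,
    Pi.smul_apply, Sum.elim_inl, Sum.elim_inr] at h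
  obtain ⟨⟨h₁, h₂⟩, h₃⟩ := h
  refine ⟨funext fun i ↦ ?_, funext fun i ↦ ?_, funext fun i ↦ ?_⟩
  · simpa using h₁ i
  · simpa [sub_eq_add_neg] using h₂ i
  · simpa using h₃ i

theorem Complex.norm_one_sub_lt_one_of_quadratic {s p q μ : ℂ} (hs : 0 < s) (hp : 0 < p)
    (hq : 0 ≤ q) (hspq : q.re + 2 * p.re < 4 * s.re) (hμ : μ ≠ 0)
    (h : s * μ ^ 2 - (p + q) * μ + q = 0) : ‖1 - μ‖ < 1 := by
  obtain ⟨S, rfl⟩ : ∃ S : ℝ, s = S := ⟨s.re, eq_re_of_ofReal_le (r := 0) (by simpa using hs.le)⟩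
  obtain ⟨P, rfl⟩ : ∃ P : ℝ, p = P := ⟨p.re, eq_re_of_ofReal_le (r := 0) (by simpa using hp.le)⟩
  obtain ⟨Q, rfl⟩ : ∃ Q : ℝ, q = Q := ⟨q.re, eq_re_of_ofReal_le (r := 0) (by simpa using hq)⟩
  rw [zero_lt_real] at hs hp
  rw [zero_le_real] at hq
  simp only [ofReal_re] at hspq
  obtain ⟨a, b, rfl⟩ : ∃ a b : ℝ, μ = ⟨a, b⟩ := ⟨μ.re, μ.im, rfl⟩
  have hre := congrArg re h
  have him := congrArg im h
  simp only [sub_re, add_re, mul_re, add_im, mul_im, sub_im, ofReal_re, ofReal_im, sq,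
    zero_re, zero_im, zero_mul, add_zero, sub_zero] at hre him
  rw [← sq_lt_one_iff₀ (norm_nonneg _), Complex.sq_norm, normSq_apply]
  simp only [sub_re, sub_im, one_re, one_im]
  rcases eq_or_ne b 0 with rfl | hb
  · have ha : a ≠ 0 := fun ha ↦ hμ (by rw [ha]; rfl)
    have ha_pos : 0 < a := by
      by_contra! ha'
      nlinarith [lt_of_le_of_ne ha' ha]
    have ha_lt : a < 2 := by
      by_contra! ha'
      -- `f a = S a² - (P + Q) a + Q` has `f 2 = 4S - 2P - Q > 0` and
      -- `f a - f 2 = (a - 2) (S (a + 2) - P - Q)`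
      nlinarith [mul_nonneg (sub_nonneg.mpr ha') (by nlinarith : 0 ≤ S * a + 2 * S - P - Q)]
    nlinarith
  · have hsum : 2 * S * a = P + Q := by
      have : b * (2 * S * a - (P + Q)) = 0 := by linear_combination him
      linarith [(mul_eq_zero.mp this).resolve_left hb]
    nlinarith

theorem eigenvalue_modulus_lt_one_general {n m l : ℕ} (α β : ℝ)
    (A : Matrix (Fin n) (Fin n) ℝ) (B : Matrix (Fin m) (Fin n) ℝ)
    (C : Matrix (Fin l) (Fin m) ℝ)
    (hA : A.PosDef) (hB : B.rank = m)
    (hα : 0 < α) (hβ : 0 < β)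
    (lam : ℂ) (x : Fin n → ℂ) (y : Fin m → ℂ) (z : Fin l → ℂ)
    (heig : ((iterG α β A B C).map Complex.ofReal).mulVec (Sum.elim (Sum.elim x y) z) =
      lam • Sum.elim (Sum.elim x y) z)
    (hlam0 : lam ≠ 0) (hlam1 : lam ≠ 1)
    (hy : star y ⬝ᵥ y = 1)
    (hineq :
      (star y ⬝ᵥ
          ((Cᵀ * (α • (1 : Matrix (Fin l) (Fin l) ℝ) + β • (C * Cᵀ))⁻¹ * C).map
            Complex.ofReal).mulVec y).re +
        2 * (star y ⬝ᵥ ((B * A⁻¹ * Bᵀ).map Complex.ofReal).mulVec y).re <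
      4 * (star y ⬝ᵥ
          ((α • (1 : Matrix (Fin m) (Fin m) ℝ) + β • (B * Bᵀ)).map Complex.ofReal).mulVec y).re) :
    ‖lam‖ < 1 := by
  have hSB := posDef_smul_one_add_smul_mul_transpose hα hβ.le B
  have hSC := posDef_smul_one_add_smul_mul_transpose hα hβ.le C
  have hy0 : y ≠ 0 := by rintro rfl; simp at hy
  obtain ⟨h₁, h₂, h₃⟩ := block_equations_of_calB_mulVec_eq_smul_precondP_mulVec
    (map_ofReal_mulVec_eq_of_mulVec_one_sub_inv_mul (isUnit_det_precondP hA hα hβ.le B C) heig)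
  have hquad := quadratic_of_block_equations
    (map_ofReal_nonsing_inv_mul hA.det_pos.ne'.isUnit)
    (map_ofReal_nonsing_inv_mul hSC.det_pos.ne'.isUnit) (sub_eq_self.not.mpr hlam0)
    h₁ h₂ h₃ (star y)
  simp only [← map_ofReal_mul] at hquad
  have hs := hSB.map_ofReal.dotProduct_mulVec_pos hy0
  have hp := (hA.inv.mul_mul_conjTranspose_same
    (vecMul_injective_of_rank_eq_card (by simpa using hB))).map_ofReal.dotProduct_mulVec_pos hy0
  have hq := (hSC.inv.posSemidef.conjTranspose_mul_mul_same C).map_ofReal.dotProduct_mulVec_nonneg y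
  simp only [conjTranspose_eq_transpose_of_trivial] at hp hq
  simpa only [sub_sub_cancel] using
    Complex.norm_one_sub_lt_one_of_quadratic hs hp hq hineq (sub_ne_zero.mpr hlam1.symm) hquad

/-- Let `(λ, (x; y; z))` be an eigenpair of `G_{α,β} = I − P⁻¹𝓑` with `λ ≠ 0`, `λ ≠ 1`
and `‖y‖₂ = 1` (i.e. `yᴴ y = 1`). If
`yᴴCᵀ(αI + βCCᵀ)⁻¹Cy + 2 yᴴBA⁻¹Bᵀy < 4 yᴴ(αI + βBBᵀ)y`, then `|λ| < 1`. -/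
theorem eigenvalue_modulus_lt_one {n m l : ℕ} (α β : ℝ)
    (A : Matrix (Fin n) (Fin n) ℝ) (B : Matrix (Fin m) (Fin n) ℝ)
    (C : Matrix (Fin l) (Fin m) ℝ)
    (hA : A.PosDef) (hB : B.rank = m) (hC : C.rank = l) (hnm : m ≤ n) (hml : l ≤ m)
    (hα : 0 < α) (hβ : 0 < β)
    (lam : ℂ) (x : Fin n → ℂ) (y : Fin m → ℂ) (z : Fin l → ℂ)
    (hv : Sum.elim (Sum.elim x y) z ≠ 0)
    (heig : ((iterG α β A B C).map Complex.ofReal).mulVec (Sum.elim (Sum.elim x y) z) =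
      lam • Sum.elim (Sum.elim x y) z)
    (hlam0 : lam ≠ 0) (hlam1 : lam ≠ 1)
    (hy : star y ⬝ᵥ y = 1)
    (hineq :
      (star y ⬝ᵥ
          ((Cᵀ * (α • (1 : Matrix (Fin l) (Fin l) ℝ) + β • (C * Cᵀ))⁻¹ * C).map
            Complex.ofReal).mulVec y).re +
        2 * (star y ⬝ᵥ ((B * A⁻¹ * Bᵀ).map Complex.ofReal).mulVec y).re <
      4 * (star y ⬝ᵥ
          ((α • (1 : Matrix (Fin m) (Fin m) ℝ) + β • (B * Bᵀ)).map Complex.ofReal).mulVec y).re) :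
    ‖lam‖ < 1 :=
  eigenvalue_modulus_lt_one_general α β A B C hA hB hα hβ lam x y z heig hlam0 hlam1 hy hineq
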